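/- arXiv:2005.07937 — 8 statements merged into one kernel-verified Lean document; each statement's English description precedes it below -/
import Mathlib

section
/- Given a commutative diagram of monoids consisting of two short exact sequences of monoids 0 → K → A → B → 0 and 0 → K' → A' → B' → 0 (with vertical morphisms a : K → K', b : A → A', c : B → B'), where both rows are special Schreier extensions (i.e., A → B and A' → B' are surjective special Schreier morphisms with the given kernels), if a is an isomorphism then the right-hand square (b, c with A → B and A' → B') is a pullback of monoids. -/
/-
Since `a` is an isomorphism and the left squares commute, `b` restricts to a bijection
`ker f ≅ ker f'`. The Schreier condition makes every fibre `f⁻¹(f x₀)` a copy of `ker f`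
via `k ↦ k + x₀`, and `b` carries this parametrisation to that of the fibre of `f'` over
`f' (b x₀)`. Hence `b` maps each fibre of `f` bijectively onto the corresponding fibre of `f'`,
which is exactly the pullback property.
-/

/-- A surjective monoid homomorphism `f` is a special Schreier morphism when every pair
`a, b` with `f a = f b` admits a unique kernel element `k` (`f k = 0`) with `b = k + a`. -/
def IsSpecialSchreier {A B : Type*} [AddMonoid A] [AddMonoid B] (f : A →+ B) : Prop :=
  ∀ a b : A, f a = f b → ∃! k : A, f k = 0 ∧ b = k + a

section

variable {K A B K' A' B' : Type*} [AddMonoid K] [AddMonoid A] [AddMonoid B]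
  [AddMonoid K'] [AddMonoid A'] [AddMonoid B']

theorem bijOn_mker_of_bijective {i : K →+ A} {f : A →+ B} {i' : K' →+ A'} {f' : A' →+ B'}
    {a : K →+ K'} {b : A →+ A'}
    (hker : ∀ x : A, f x = 0 ↔ x ∈ Set.range i) (hker' : ∀ x : A', f' x = 0 ↔ x ∈ Set.range i')
    (hi' : Function.Injective i') (hcl : ∀ k : K, b (i k) = i' (a k))
    (ha : Function.Bijective a) :
    Set.BijOn b (AddMonoidHom.mker f) (AddMonoidHom.mker f') := by
  refine ⟨?mapsTo, ?injOn, ?surjOn⟩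
  case mapsTo =>
    rintro x hx
    obtain ⟨n, rfl⟩ := (hker x).mp hx
    exact (hker' _).mpr ⟨a n, (hcl n).symm⟩
  case injOn =>
    rintro x hx y hy hxy
    obtain ⟨n, rfl⟩ := (hker x).mp hx
    obtain ⟨m, rfl⟩ := (hker y).mp hy
    rw [hcl, hcl] at hxy
    rw [ha.1 (hi' hxy)]
  case surjOn =>
    rintro x' hx'
    obtain ⟨m', rfl⟩ := (hker' x').mp hx'
    obtain ⟨m, rfl⟩ := ha.2 m'
    exact ⟨i m, (hker _).mpr ⟨m, rfl⟩, hcl m⟩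

theorem IsSpecialSchreier.existsUnique_of_bijOn_mker {f : A →+ B} {f' : A' →+ B'}
    {b : A →+ A'} {c : B →+ B'} (hS : IsSpecialSchreier f) (hS' : IsSpecialSchreier f')
    (hf : Function.Surjective f) (hcr : ∀ x : A, c (f x) = f' (b x))
    (hb : Set.BijOn b (AddMonoidHom.mker f) (AddMonoidHom.mker f')) (y : B) (z : A')
    (hyz : c y = f' z) : ∃! x : A, f x = y ∧ b x = z := by
  obtain ⟨x₀, rfl⟩ := hf y
  obtain ⟨k', ⟨hk', rfl⟩, hk'_unique⟩ := hS' (b x₀) z (by rw [← hcr, hyz])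
  obtain ⟨k, hk, rfl⟩ := hb.surjOn hk'
  refine ⟨k + x₀, ⟨?_, ?_⟩, ?_⟩
  · rw [map_add, show f k = 0 from hk, zero_add]
  · rw [map_add]
  · rintro x ⟨hfx, hbx⟩
    obtain ⟨l, ⟨hl, rfl⟩, -⟩ := hS x₀ x hfx.symm
    have hbl : b l = b k := hk'_unique (b l) ⟨hb.mapsTo hl, by rw [← hbx, map_add]⟩
    rw [hb.injOn hl hk hbl]

end

theorem stmt_5_general (K A B K' A' B' : Type*)
    [AddMonoid K] [AddMonoid A] [AddMonoid B] [AddMonoid K'] [AddMonoid A'] [AddMonoid B']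
    (i : K →+ A) (f : A →+ B) (i' : K' →+ A') (f' : A' →+ B')
    (a : K →+ K') (b : A →+ A') (c : B →+ B')
    -- the rows are short exact sequences of monoids:
    (hf : Function.Surjective f)
    (hker : ∀ x : A, f x = 0 ↔ x ∈ Set.range i)
    (hi' : Function.Injective i')
    (hker' : ∀ x : A', f' x = 0 ↔ x ∈ Set.range i')
    -- the rows are special Schreier extensions:
    (hS : IsSpecialSchreier f) (hS' : IsSpecialSchreier f')
    -- the diagram commutes:
    (hcl : ∀ k : K, b (i k) = i' (a k)) (hcr : ∀ x : A, c (f x) = f' (b x))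
    -- `a` is an isomorphism:
    (ha : Function.Bijective a) :
    -- the right-hand square is a pullback of monoids:
    ∀ (y : B) (z : A'), c y = f' z → ∃! x : A, f x = y ∧ b x = z :=
  hS.existsUnique_of_bijOn_mker hS' hf hcr (bijOn_mker_of_bijective hker hker' hi' hcl ha)

/-- Given a morphism of special Schreier extensions of monoids
`(a, b, c) : (K → A → B) → (K' → A' → B')` in which `a` is an isomorphism, the
right-hand square is a pullback of monoids. -/
theorem stmt_5 (K A B K' A' B' : Type*)
    [AddMonoid K] [AddMonoid A] [AddMonoid B] [AddMonoid K'] [AddMonoid A'] [AddMonoid B']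
    (i : K →+ A) (f : A →+ B) (i' : K' →+ A') (f' : A' →+ B')
    (a : K →+ K') (b : A →+ A') (c : B →+ B')
    -- the rows are short exact sequences of monoids:
    (hi : Function.Injective i) (hf : Function.Surjective f)
    (hker : ∀ x : A, f x = 0 ↔ x ∈ Set.range i)
    (hi' : Function.Injective i') (hf' : Function.Surjective f')
    (hker' : ∀ x : A', f' x = 0 ↔ x ∈ Set.range i')
    -- the rows are special Schreier extensions:
    (hS : IsSpecialSchreier f) (hS' : IsSpecialSchreier f')
    -- the diagram commutes:
    (hcl : ∀ k : K, b (i k) = i' (a k)) (hcr : ∀ x : A, c (f x) = f' (b x))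
    -- `a` is an isomorphism:
    (ha : Function.Bijective a) :
    -- the right-hand square is a pullback of monoids:
    ∀ (y : B) (z : A'), c y = f' z → ∃! x : A, f x = y ∧ b x = z :=
  stmt_5_general K A B K' A' B' i f i' f' a b c hf hker hi' hker' hS hS' hcl hcr ha
end

section
/- Special Schreier extensions of monoids satisfy the Short Five Lemma: given a commutative diagram of two special Schreier extensions 0 → K → A → B → 0 and 0 → K' → A' → B' → 0 with vertical morphisms a : K → K', b : A → A', c : B → B', if a and c are isomorphisms then b is an isomorphism. -/
theorem IsSpecialSchreier.eq_zero_of_add_eq {A B : Type*} [AddMonoid A] [AddMonoid B]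
    {f : A →+ B} (hS : IsSpecialSchreier f) {k x : A} (hk : f k = 0) (h : k + x = x) : k = 0 :=
  (hS x x rfl).unique ⟨hk, h.symm⟩ ⟨map_zero f, (zero_add x).symm⟩

section ShortFive

variable {K A B K' A' B' : Type*}
  [AddMonoid K] [AddMonoid A] [AddMonoid B] [AddMonoid K'] [AddMonoid A'] [AddMonoid B']
  {i : K →+ A} {f : A →+ B} {i' : K' →+ A'} {f' : A' →+ B'}
  {a : K →+ K'} {b : A →+ A'} {c : B →+ B'}

theorem shortFive_injective_of_isSpecialSchreier
    (hS : IsSpecialSchreier f) (hS' : IsSpecialSchreier f')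
    (hker : ∀ x : A, f x = 0 → x ∈ Set.range i) (hfi' : ∀ k : K', f' (i' k) = 0)
    (hi' : Function.Injective i')
    (hcl : ∀ k : K, b (i k) = i' (a k)) (hcr : ∀ x : A, c (f x) = f' (b x))
    (ha : Function.Injective a) (hc : Function.Injective c) :
    Function.Injective b := by
  intro x y hxy
  have hfxy : f x = f y := hc (by rw [hcr, hcr, hxy])
  obtain ⟨k, hk, rfl⟩ := (hS x y hfxy).exists
  obtain ⟨m, rfl⟩ := hker k hk
  have him : i' (a m) = 0 :=
    hS'.eq_zero_of_add_eq (hfi' _) (by rw [← hcl, ← map_add, ← hxy])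
  have hm : m = 0 := ha (hi' (by simp [him]))
  rw [hm, map_zero, zero_add]

theorem shortFive_surjective_of_isSpecialSchreier
    (hS' : IsSpecialSchreier f') (hf : Function.Surjective f)
    (hker' : ∀ x : A', f' x = 0 → x ∈ Set.range i')
    (hcl : ∀ k : K, b (i k) = i' (a k)) (hcr : ∀ x : A, c (f x) = f' (b x))
    (ha : Function.Surjective a) (hc : Function.Surjective c) :
    Function.Surjective b := by
  intro y
  obtain ⟨z, hz⟩ := hc (f' y)
  obtain ⟨x, rfl⟩ := hf z
  obtain ⟨k', hk', rfl⟩ := (hS' (b x) y (by rw [← hcr, hz])).exists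
  obtain ⟨m', rfl⟩ := hker' k' hk'
  obtain ⟨m, rfl⟩ := ha m'
  exact ⟨i m + x, by rw [map_add, hcl]⟩

end ShortFive

theorem stmt_6_general (K A B K' A' B' : Type*)
    [AddMonoid K] [AddMonoid A] [AddMonoid B] [AddMonoid K'] [AddMonoid A'] [AddMonoid B']
    (i : K →+ A) (f : A →+ B) (i' : K' →+ A') (f' : A' →+ B')
    (a : K →+ K') (b : A →+ A') (c : B →+ B')
    -- the rows are short exact sequences of monoids:
    (hf : Function.Surjective f)
    (hker : ∀ x : A, f x = 0 ↔ x ∈ Set.range i)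
    (hi' : Function.Injective i')
    (hker' : ∀ x : A', f' x = 0 ↔ x ∈ Set.range i')
    -- the rows are special Schreier extensions:
    (hS : IsSpecialSchreier f) (hS' : IsSpecialSchreier f')
    -- the diagram commutes:
    (hcl : ∀ k : K, b (i k) = i' (a k)) (hcr : ∀ x : A, c (f x) = f' (b x))
    -- `a` and `c` are isomorphisms:
    (ha : Function.Bijective a) (hc : Function.Bijective c) :
    Function.Bijective b :=
  ⟨shortFive_injective_of_isSpecialSchreier hS hS' (fun x => (hker x).1)
      (fun k => (hker' _).2 ⟨k, rfl⟩) hi' hcl hcr ha.1 hc.1,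
    shortFive_surjective_of_isSpecialSchreier hS' hf (fun x => (hker' x).1) hcl hcr ha.2 hc.2⟩

/-- The Short Five Lemma for special Schreier extensions of monoids:
if `a` and `c` are isomorphisms, so is `b`. -/
theorem stmt_6 (K A B K' A' B' : Type*)
    [AddMonoid K] [AddMonoid A] [AddMonoid B] [AddMonoid K'] [AddMonoid A'] [AddMonoid B']
    (i : K →+ A) (f : A →+ B) (i' : K' →+ A') (f' : A' →+ B')
    (a : K →+ K') (b : A →+ A') (c : B →+ B')
    -- the rows are short exact sequences of monoids:
    (hi : Function.Injective i) (hf : Function.Surjective f)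
    (hker : ∀ x : A, f x = 0 ↔ x ∈ Set.range i)
    (hi' : Function.Injective i') (hf' : Function.Surjective f')
    (hker' : ∀ x : A', f' x = 0 ↔ x ∈ Set.range i')
    -- the rows are special Schreier extensions:
    (hS : IsSpecialSchreier f) (hS' : IsSpecialSchreier f')
    -- the diagram commutes:
    (hcl : ∀ k : K, b (i k) = i' (a k)) (hcr : ∀ x : A, c (f x) = f' (b x))
    -- `a` and `c` are isomorphisms:
    (ha : Function.Bijective a) (hc : Function.Bijective c) :
    Function.Bijective b :=
  stmt_6_general K A B K' A' B' i f i' f' a b c hf hker hi' hker' hS hS' hcl hcr ha hc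
end

section
/- Let G be a group and P_G a submonoid closed under conjugation. Define H = ℤ × G and P_H = (ℕ × P_G) \ {(0, g) | g ≠ 0}. Then P_H is a submonoid of H closed under conjugation, P_H is a reduced monoid, and the projection f : H → G, f(z, g) = g, is a surjective group homomorphism with f(P_H) = P_G. -/
/-! Enlarging `G` by an ordered factor `A` and putting a copy of `P` only over the strictly
positive part of `A` (and `0` over `0`) kills every nonzero invertible element of the cone:
if `x + y = 0` with both in the cone, the `A`-components are nonnegative with sum `0`, hence
both vanish, which forces the `G`-components to vanish. Conjugation does not move the
`A`-component, because `A` is commutative, so conjugation invariance is inherited from `P`. -/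

namespace AddSubmonoid

section

variable {G : Type*} [AddMonoid G]

def reducedLift (A : Type*) [AddCommMonoid A] [PartialOrder A] [IsOrderedAddMonoid A]
    (P : AddSubmonoid G) : AddSubmonoid (A × G) where
  carrier := {x | 0 ≤ x.1 ∧ x.2 ∈ P ∧ (x.1 = 0 → x.2 = 0)}
  zero_mem' := ⟨le_rfl, P.zero_mem, fun _ => rfl⟩
  add_mem' := by
    rintro x y ⟨hx1, hx2, hx0⟩ ⟨hy1, hy2, hy0⟩
    refine ⟨add_nonneg hx1 hy1, P.add_mem hx2 hy2, fun hxy => ?_⟩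
    obtain ⟨hx, hy⟩ := (add_eq_zero_iff_of_nonneg hx1 hy1).mp hxy
    change x.2 + y.2 = 0
    rw [hx0 hx, hy0 hy, add_zero]

variable {A : Type*} [AddCommMonoid A] [PartialOrder A] [IsOrderedAddMonoid A]
  {P : AddSubmonoid G}

theorem coe_reducedLift :
    (reducedLift A P : Set (A × G)) = {x | 0 ≤ x.1 ∧ x.2 ∈ P ∧ (x.1 = 0 → x.2 = 0)} :=
  rfl

theorem eq_zero_of_add_eq_zero_of_mem_reducedLift {x y : A × G} (hx : x ∈ reducedLift A P)
    (hy : y ∈ reducedLift A P) (hxy : x + y = 0) : x = 0 ∧ y = 0 := by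
  obtain ⟨hx1, -, hx2⟩ := hx
  obtain ⟨hy1, -, hy2⟩ := hy
  obtain ⟨hx0, hy0⟩ := (add_eq_zero_iff_of_nonneg hx1 hy1).mp (congrArg Prod.fst hxy)
  exact ⟨Prod.ext hx0 (hx2 hx0), Prod.ext hy0 (hy2 hy0)⟩

theorem image_snd_reducedLift {a : A} (ha : 0 < a) :
    Prod.snd '' (reducedLift A P : Set (A × G)) = P := by
  ext g
  constructor
  · rintro ⟨x, ⟨-, hx, -⟩, rfl⟩
    exact hx
  · intro hg
    exact ⟨(a, g), ⟨ha.le, hg, fun h => absurd h ha.ne'⟩, rfl⟩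

end

theorem add_sub_mem_reducedLift {A G : Type*} [AddCommGroup A] [PartialOrder A]
    [IsOrderedAddMonoid A] [AddGroup G] {P : AddSubmonoid G}
    (hconj : ∀ g : G, ∀ p ∈ P, g + p - g ∈ P) (h : A × G) {q : A × G}
    (hq : q ∈ reducedLift A P) : h + q - h ∈ reducedLift A P := by
  obtain ⟨hq1, hq2, hq0⟩ := hq
  have hfst : (h + q - h).1 = q.1 := add_sub_cancel_left h.1 q.1
  refine ⟨hfst ▸ hq1, hconj h.2 q.2 hq2, fun h0 => ?_⟩
  simp only [Prod.snd_sub, Prod.snd_add, hq0 (hfst ▸ h0), add_zero, sub_self]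

end AddSubmonoid

open AddSubmonoid in
/-- For any preordered group `(G, P)`, setting `H = ℤ × G` with cone
`P_H = (ℕ × P) \ {(0, g) | g ≠ 0}`, `P_H` is a conjugation-closed reduced submonoid of `H`
and the second projection is surjective with `f(P_H) = P`. -/
theorem stmt_7 (G : Type*) [AddGroup G] (P : AddSubmonoid G)
    (hconj : ∀ g : G, ∀ p ∈ P, g + p - g ∈ P) :
    ∃ Q : AddSubmonoid (ℤ × G),
      (Q : Set (ℤ × G)) = {x : ℤ × G | 0 ≤ x.1 ∧ x.2 ∈ P ∧ (x.1 = 0 → x.2 = 0)} ∧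
      (∀ h : ℤ × G, ∀ q ∈ Q, h + q - h ∈ Q) ∧
      (∀ x y : ℤ × G, x ∈ Q → y ∈ Q → x + y = 0 → x = 0 ∧ y = 0) ∧
      Function.Surjective (Prod.snd : ℤ × G → G) ∧
      Prod.snd '' (Q : Set (ℤ × G)) = (P : Set G) :=
  ⟨reducedLift ℤ P, coe_reducedLift, fun h _ => add_sub_mem_reducedLift hconj h,
    fun _ _ => eq_zero_of_add_eq_zero_of_mem_reducedLift, Prod.snd_surjective,
    image_snd_reducedLift one_pos⟩
end

section
/- Let f : G → H be a group homomorphism, P_G and P_H submonoids closed under conjugation in G and H respectively with f(P_G) ⊆ P_H, and suppose the kernel K = ker(f) satisfies K ⊆ P_G (i.e., the morphism of preordered groups (f, f̄) has kernel in the torsion subcategory of groups with total preorder, with K ∩ P_G = K). If moreover f and its restriction f̄ : P_G → P_H are both surjective, then the induced map on quotients G/N_G → H/N_H is an isomorphism, where N_G and N_H are the unit groups of P_G and P_H. -/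
/-! The induced map is surjective because `f` is. For injectivity, if `f x ∈ N_H` then both
`f x` and `-f x` lie in `P_H`, so by surjectivity on cones `f x = f p` and `-f x = f p'` with
`p, p' ∈ P_G`; then `x - p` and `-x - p'` lie in the kernel, hence in `P_G`, and
`x = (x - p) + p`, `-x = (-x - p') + p'` lie in `P_G`, i.e. `x ∈ N_G`. -/

section PreorderedAddGroup

variable {G H : Type*} [AddGroup G] [AddGroup H] {P : AddSubmonoid G} {Q : AddSubmonoid H}
  {f : G →+ H}

theorem AddSubmonoid.comap_le_of_ker_le_of_le_map (hker : f.ker.toAddSubmonoid ≤ P)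
    (hQ : Q ≤ P.map f) : Q.comap f ≤ P := by
  intro x hx
  obtain ⟨p, hp, hfp⟩ := hQ hx
  have hxp : x - p ∈ P := hker (by simp [hfp])
  simpa using P.add_mem hxp hp

variable {NG : AddSubgroup G} {NH : AddSubgroup H}

theorem le_comap_of_le_comap_cone (hNG : ∀ x, x ∈ NG ↔ x ∈ P ∧ -x ∈ P)
    (hNH : ∀ y, y ∈ NH ↔ y ∈ Q ∧ -y ∈ Q) (hPQ : P ≤ Q.comap f) : NG ≤ NH.comap f := by
  intro x hx
  rw [hNG] at hx
  rw [AddSubgroup.mem_comap, hNH, ← map_neg]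
  exact ⟨hPQ hx.1, hPQ hx.2⟩

theorem comap_le_of_comap_cone_le (hNG : ∀ x, x ∈ NG ↔ x ∈ P ∧ -x ∈ P)
    (hNH : ∀ y, y ∈ NH ↔ y ∈ Q ∧ -y ∈ Q) (hQP : Q.comap f ≤ P) : NH.comap f ≤ NG := by
  intro x hx
  rw [AddSubgroup.mem_comap, hNH, ← map_neg] at hx
  rw [hNG]
  exact ⟨hQP hx.1, hQP hx.2⟩

end PreorderedAddGroup

theorem QuotientAddGroup.map_injective_of_comap_le {G H : Type*} [AddGroup G] [AddGroup H]
    (N : AddSubgroup G) [N.Normal] (M : AddSubgroup H) [M.Normal] (f : G →+ H)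
    (h : N ≤ M.comap f) (hMN : M.comap f ≤ N) : Function.Injective (map N M f h) := by
  rw [injective_iff_map_eq_zero]
  intro a ha
  induction a using QuotientAddGroup.induction_on with
  | H x =>
    rw [map_mk, eq_zero_iff] at ha
    exact (eq_zero_iff x).2 (hMN ha)

theorem stmt_9_general (G H : Type*) [AddGroup G] [AddGroup H]
    (P : AddSubmonoid G) (Q : AddSubmonoid H)
    (f : G →+ H) (hcone : ∀ p ∈ P, f p ∈ Q)
    (hker : ∀ x : G, f x = 0 → x ∈ P)
    (hsurj : Function.Surjective f)
    (hconesurj : ∀ q ∈ Q, ∃ p ∈ P, f p = q)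
    (NG : AddSubgroup G) [NG.Normal] (hNG : ∀ x : G, x ∈ NG ↔ x ∈ P ∧ -x ∈ P)
    (NH : AddSubgroup H) [NH.Normal] (hNH : ∀ y : H, y ∈ NH ↔ y ∈ Q ∧ -y ∈ Q) :
    ∃ hle : NG ≤ NH.comap f,
      Function.Bijective (QuotientAddGroup.map NG NH f hle) := by
  have hQP : Q.comap f ≤ P :=
    AddSubmonoid.comap_le_of_ker_le_of_le_map (fun x hx ↦ hker x hx) hconesurj
  have hle : NG ≤ NH.comap f := le_comap_of_le_comap_cone hNG hNH hcone
  exact ⟨hle,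
    QuotientAddGroup.map_injective_of_comap_le NG NH f hle
      (comap_le_of_comap_cone_le hNG hNH hQP),
    QuotientAddGroup.map_surjective_of_surjective NG NH f
      (QuotientAddGroup.mk_surjective.comp hsurj) hle⟩

/-- If `(f, f̄)` is a normal epimorphism of preordered groups (both `f` and
its restriction to the cones are surjective) whose kernel has total preorder
(`ker f ⊆ P_G`), then the induced map `G ⧸ N_G → H ⧸ N_H` is an isomorphism. -/
theorem stmt_9 (G H : Type*) [AddGroup G] [AddGroup H]
    (P : AddSubmonoid G) (Q : AddSubmonoid H)
    (hconjG : ∀ g : G, ∀ p ∈ P, g + p - g ∈ P)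
    (hconjH : ∀ h : H, ∀ q ∈ Q, h + q - h ∈ Q)
    (f : G →+ H) (hcone : ∀ p ∈ P, f p ∈ Q)
    (hker : ∀ x : G, f x = 0 → x ∈ P)
    (hsurj : Function.Surjective f)
    (hconesurj : ∀ q ∈ Q, ∃ p ∈ P, f p = q)
    (NG : AddSubgroup G) [NG.Normal] (hNG : ∀ x : G, x ∈ NG ↔ x ∈ P ∧ -x ∈ P)
    (NH : AddSubgroup H) [NH.Normal] (hNH : ∀ y : H, y ∈ NH ↔ y ∈ Q ∧ -y ∈ Q) :
    ∃ hle : NG ≤ NH.comap f,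
      Function.Bijective (QuotientAddGroup.map NG NH f hle) :=
  stmt_9_general G H P Q f hcone hker hsurj hconesurj NG hNG NH hNH
end

section
/- Let f : G → H be a group homomorphism with f(P_G) ⊆ P_H, where P_G, P_H are conjugation-closed submonoids, and let φ : N_G → N_H denote the restriction of f to the unit groups of the cones. If φ is bijective, then the induced commutative square formed by f, the quotient maps η_G : G → G/N_G, η_H : H → H/N_H, and the induced map α : G/N_G → H/N_H is a pullback of groups: G ≅ (G/N_G) ×_{H/N_H} H. -/
/-! If `f g₀` and `h` agree modulo `M`, the difference `(f g₀)⁻¹ h ∈ M` lifts to some `n ∈ N` and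
`g₀ n` is a solution; two solutions differ by an element of `N` killed by `f`, hence are equal. -/

namespace Submonoid

variable {G H : Type*} [Group G] [Group H]

@[to_additive]
theorem mulSupport_le_comap {P : Submonoid G} {Q : Submonoid H} {f : G →* H}
    (hf : P ≤ Q.comap f) : P.mulSupport ≤ Q.mulSupport.comap f :=
  fun _ hx ↦ ⟨hf hx.1, by simpa using hf hx.2⟩

end Submonoid

namespace QuotientGroup

variable {G H : Type*} [Group G] [Group H] {N : Subgroup G} {M : Subgroup H} {f : G →* H}

@[to_additive]
theorem eq_of_mk_eq_of_map_eq (hinj : Set.InjOn f N) {g₁ g₂ : G}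
    (hmk : (g₁ : G ⧸ N) = g₂) (hf : f g₁ = f g₂) : g₁ = g₂ := by
  have hN : g₁⁻¹ * g₂ ∈ N := QuotientGroup.eq.mp hmk
  have hker : f (g₁⁻¹ * g₂) = f 1 := by rw [map_mul, map_inv, hf, inv_mul_cancel, map_one]
  exact inv_mul_eq_one.mp (hinj hN N.one_mem hker)

@[to_additive]
theorem exists_mk_eq_and_map_eq (hsurj : M ≤ N.map f) {g₀ : G} {h : H}
    (hgh : (f g₀ : H ⧸ M) = h) : ∃ g : G, (g : G ⧸ N) = g₀ ∧ f g = h := by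
  obtain ⟨n, hn, hfn⟩ := hsurj (QuotientGroup.eq.mp hgh)
  refine ⟨g₀ * n, QuotientGroup.eq.mpr ?_, by rw [map_mul, hfn, mul_inv_cancel_left]⟩
  simpa using inv_mem hn

/-- The square formed by `f`, the two quotient maps and the induced map on quotients is a
pullback as soon as `f` restricts to a bijection `N → M`. -/
@[to_additive]
theorem existsUnique_of_map_eq_mk [N.Normal] [M.Normal] (hle : N ≤ M.comap f)
    (hinj : Set.InjOn f N) (hsurj : M ≤ N.map f) (u : G ⧸ N) (h : H)
    (hu : map N M f hle u = h) : ∃! g : G, (g : G ⧸ N) = u ∧ f g = h := by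
  obtain ⟨g₀, rfl⟩ := mk_surjective u
  obtain ⟨g, hg, hfg⟩ := exists_mk_eq_and_map_eq hsurj hu
  exact ⟨g, ⟨hg, hfg⟩, fun g' ⟨hg', hfg'⟩ ↦
    eq_of_mk_eq_of_map_eq hinj (hg'.trans hg.symm) (hfg'.trans hfg.symm)⟩

end QuotientGroup

theorem stmt_10_general (G H : Type*) [AddGroup G] [AddGroup H]
    (P : AddSubmonoid G) (Q : AddSubmonoid H)
    (f : G →+ H) (hcone : ∀ p ∈ P, f p ∈ Q)
    (NG : AddSubgroup G) [NG.Normal] (hNG : ∀ x : G, x ∈ NG ↔ x ∈ P ∧ -x ∈ P)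
    (NH : AddSubgroup H) [NH.Normal] (hNH : ∀ y : H, y ∈ NH ↔ y ∈ Q ∧ -y ∈ Q)
    -- the restriction of `f` to the unit groups is bijective:
    (hinj : ∀ n₁ ∈ NG, ∀ n₂ ∈ NG, f n₁ = f n₂ → n₁ = n₂)
    (hsurj : ∀ m ∈ NH, ∃ n ∈ NG, f n = m) :
    ∃ hle : NG ≤ NH.comap f,
      ∀ (u : G ⧸ NG) (h : H),
        QuotientAddGroup.map NG NH f hle u = QuotientAddGroup.mk' NH h →
        ∃! g : G, QuotientAddGroup.mk' NG g = u ∧ f g = h := by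
  have hle : NG ≤ NH.comap f := fun x hx ↦
    (hNH (f x)).mpr (AddSubmonoid.support_le_comap hcone ((hNG x).mp hx))
  refine ⟨hle, fun u h hu ↦ ?_⟩
  simpa only [QuotientAddGroup.mk'_apply] using
    QuotientAddGroup.existsUnique_of_map_eq_mk hle (fun n₁ h₁ n₂ h₂ ↦ hinj n₁ h₁ n₂ h₂)
      (fun m hm ↦ hsurj m hm) u h hu

/-- If the restriction `φ : N_G → N_H` of a morphism of preordered groups
to the unit groups of the cones is bijective, then the square formed by `f`, the quotient
maps and the induced map `G ⧸ N_G → H ⧸ N_H` is a pullback of groups. -/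
theorem stmt_10 (G H : Type*) [AddGroup G] [AddGroup H]
    (P : AddSubmonoid G) (Q : AddSubmonoid H)
    (hconjG : ∀ g : G, ∀ p ∈ P, g + p - g ∈ P)
    (hconjH : ∀ h : H, ∀ q ∈ Q, h + q - h ∈ Q)
    (f : G →+ H) (hcone : ∀ p ∈ P, f p ∈ Q)
    (NG : AddSubgroup G) [NG.Normal] (hNG : ∀ x : G, x ∈ NG ↔ x ∈ P ∧ -x ∈ P)
    (NH : AddSubgroup H) [NH.Normal] (hNH : ∀ y : H, y ∈ NH ↔ y ∈ Q ∧ -y ∈ Q)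
    -- the restriction of `f` to the unit groups is bijective:
    (hinj : ∀ n₁ ∈ NG, ∀ n₂ ∈ NG, f n₁ = f n₂ → n₁ = n₂)
    (hsurj : ∀ m ∈ NH, ∃ n ∈ NG, f n = m) :
    ∃ hle : NG ≤ NH.comap f,
      ∀ (u : G ⧸ NG) (h : H),
        QuotientAddGroup.map NG NH f hle u = QuotientAddGroup.mk' NH h →
        ∃! g : G, QuotientAddGroup.mk' NG g = u ∧ f g = h :=
  stmt_10_general G H P Q f hcone NG hNG NH hNH hinj hsurj
end

section
/- The class of partially ordered groups is closed under extensions in preordered groups: if 0 → (K, P_K) → (G, P_G) → (H, P_H) → 0 is a short exact sequence of preordered groups (i.e., K = ker f, P_K = K ∩ P_G, f surjective with f(P_G) = P_H), and both P_K and P_H are reduced monoids, then P_G is a reduced monoid. -/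
theorem stmt_13_general (G H : Type*) [AddGroup G] [AddGroup H]
    (P : AddSubmonoid G) (Q : AddSubmonoid H)
    (f : G →+ H)
    (himg : ∀ y : H, y ∈ Q ↔ ∃ p ∈ P, f p = y)
    -- the kernel cone is reduced:
    (hKred : ∀ x y : G, f x = 0 → f y = 0 → x ∈ P → y ∈ P →
      x + y = 0 → x = 0 ∧ y = 0)
    -- the quotient cone is reduced:
    (hQred : ∀ x y : H, x ∈ Q → y ∈ Q → x + y = 0 → x = 0 ∧ y = 0) :
    ∀ x y : G, x ∈ P → y ∈ P → x + y = 0 → x = 0 ∧ y = 0 := by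
  intro x y hx hy hxy
  have hxQ : f x ∈ Q := (himg (f x)).mpr ⟨x, hx, rfl⟩
  have hyQ : f y ∈ Q := (himg (f y)).mpr ⟨y, hy, rfl⟩
  have hsum : f x + f y = 0 := by rw [← map_add, hxy, map_zero]
  obtain ⟨hfx, hfy⟩ := hQred (f x) (f y) hxQ hyQ hsum
  exact hKred x y hfx hfy hx hy hxy

/-- Partially ordered groups are closed under extensions in preordered
groups: if in a short exact sequence of preordered groups both the kernel cone
`ker f ∩ P_G` and the quotient cone `P_H = f(P_G)` are reduced, then `P_G` is reduced. -/
theorem stmt_13 (G H : Type*) [AddGroup G] [AddGroup H]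
    (P : AddSubmonoid G) (Q : AddSubmonoid H)
    (hconjG : ∀ g : G, ∀ p ∈ P, g + p - g ∈ P)
    (hconjH : ∀ h : H, ∀ q ∈ Q, h + q - h ∈ Q)
    (f : G →+ H) (hsurj : Function.Surjective f)
    (himg : ∀ y : H, y ∈ Q ↔ ∃ p ∈ P, f p = y)
    -- the kernel cone is reduced:
    (hKred : ∀ x y : G, f x = 0 → f y = 0 → x ∈ P → y ∈ P →
      x + y = 0 → x = 0 ∧ y = 0)
    -- the quotient cone is reduced:
    (hQred : ∀ x y : H, x ∈ Q → y ∈ Q → x + y = 0 → x = 0 ∧ y = 0) :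
    ∀ x y : G, x ∈ P → y ∈ P → x + y = 0 → x = 0 ∧ y = 0 :=
  stmt_13_general G H P Q f himg hKred hQred
end

section
/- Any morphism f : (G, P_G) → (H, P_H) of preordered groups (a group homomorphism with f(P_G) ⊆ P_H) from a protomodular preordered group (G, P_G) (i.e., P_G a subgroup of G) to a partially ordered group (H, P_H) (i.e., P_H reduced) factors through a preordered group with trivial positive cone, namely through (f(G), 0). -/
/-- Any morphism from a protomodular preordered group (cone a subgroup)
to a partially ordered group (cone reduced) factors through the preordered group
`(f(G), 0)` with trivial cone, i.e. it kills the positive cone. -/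
theorem stmt_17 (G H : Type*) [AddGroup G] [AddGroup H]
    (P : AddSubmonoid G) (Q : AddSubmonoid H)
    (hconjG : ∀ g : G, ∀ p ∈ P, g + p - g ∈ P)
    (hconjH : ∀ h : H, ∀ q ∈ Q, h + q - h ∈ Q)
    -- `(G, P)` is protomodular: the cone is a subgroup:
    (hgrp : ∀ p ∈ P, -p ∈ P)
    -- `(H, Q)` is partially ordered: the cone is reduced:
    (hred : ∀ x y : H, x ∈ Q → y ∈ Q → x + y = 0 → x = 0 ∧ y = 0)
    (f : G →+ H) (hcone : ∀ p ∈ P, f p ∈ Q) :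
    -- `f` factors through `(f.range, 0)`: the cone is sent to `0`:
    ∀ p ∈ P, f p = 0 := by
  intro p hp
  have h1 := hcone p hp
  have h2 := hcone (-p) (hgrp p hp)
  rw [map_neg] at h2
  exact (hred _ _ h1 h2 (add_neg_cancel _)).1
end

section
/- Let G be a group and P_G a conjugation-closed submonoid, with N_G the unit group of P_G. Consider the pullback G ×_{G/N_G} H of the quotient map η_G : G → G/N_G along any group homomorphism f : H → G/N_G, where H carries a conjugation-closed submonoid P_H with image landing in the image of P_G, so the pullback carries cone P_G ×_{P_G/N_G} P_H. Then the second projection p₂ : G ×_{G/N_G} H → H is surjective, its restriction to cones P_G ×_{P̄_G} P_H → P_H is surjective, and its kernel is N_G × {0} with total cone; consequently, the induced map on quotients by unit groups (G ×_{G/N_G} H)/N → H/N_H is an isomorphism. -/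
/-! The only nontrivial part is injectivity on unit quotients: `f` maps units of `P_H` to
elements `u` of `G ⧸ N_G` with `u` and `-u` in the image of `P`, and that image is a pointed
cone because `N_G` consists of all units of `P`. -/

namespace AddSubmonoid

variable {G : Type*} [AddGroup G] {P : AddSubmonoid G} {N : AddSubgroup G}

theorem mem_units_of_add_mem_units (hN : ∀ x : G, x ∈ N ↔ x ∈ P ∧ -x ∈ P)
    {p p' : G} (hp : p ∈ P) (hp' : p' ∈ P) (hsum : p + p' ∈ N) : p ∈ N := by
  have hneg : -p ∈ P := by
    simpa [neg_add_rev, ← add_assoc] using P.add_mem hp' ((hN _).mp hsum).2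
  exact (hN p).mpr ⟨hp, hneg⟩

/-- The image of `P` in `G ⧸ N` is a pointed cone. -/
theorem mk_eq_zero_of_mk_add_mk_eq_zero [N.Normal] (hN : ∀ x : G, x ∈ N ↔ x ∈ P ∧ -x ∈ P)
    {p p' : G} (hp : p ∈ P) (hp' : p' ∈ P) (hsum : (p : G ⧸ N) + p' = 0) :
    (p : G ⧸ N) = 0 := by
  rw [← QuotientAddGroup.mk_add, QuotientAddGroup.eq_zero_iff] at hsum
  exact (QuotientAddGroup.eq_zero_iff p).mpr (mem_units_of_add_mem_units hN hp hp' hsum)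

end AddSubmonoid

theorem AddMonoidHom.map_eq_zero_of_mem_cone_of_neg_mem_cone {G H : Type*} [AddGroup G]
    [AddGroup H] {P : AddSubmonoid G} {N : AddSubgroup G} [N.Normal]
    (hN : ∀ x : G, x ∈ N ↔ x ∈ P ∧ -x ∈ P) {PH : AddSubmonoid H} (f : H →+ G ⧸ N)
    (hcone : ∀ q ∈ PH, ∃ p ∈ P, QuotientAddGroup.mk' N p = f q)
    {y : H} (hy : y ∈ PH) (hy' : -y ∈ PH) : f y = 0 := by
  obtain ⟨p, hp, hfp⟩ := hcone y hy
  obtain ⟨p', hp', hfp'⟩ := hcone (-y) hy'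
  rw [QuotientAddGroup.mk'_apply] at hfp hfp'
  rw [← hfp]
  refine AddSubmonoid.mk_eq_zero_of_mk_add_mk_eq_zero hN hp hp' ?_
  rw [hfp, hfp', ← map_add, add_neg_cancel, map_zero]

theorem stmt_18_general (G H : Type*) [AddGroup G] [AddGroup H]
    (P : AddSubmonoid G)
    (NG : AddSubgroup G) [NG.Normal] (hNG : ∀ x : G, x ∈ NG ↔ x ∈ P ∧ -x ∈ P)
    (PH : AddSubmonoid H)
    (NH : AddSubgroup H) (hNH : ∀ y : H, y ∈ NH ↔ y ∈ PH ∧ -y ∈ PH)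
    (f : H →+ G ⧸ NG)
    -- the cone of `H` is sent into the image of `P`:
    (hcone : ∀ q ∈ PH, ∃ p ∈ P, QuotientAddGroup.mk' NG p = f q) :
    -- (a) the second projection of the pullback is surjective:
    (∀ h : H, ∃ g : G, QuotientAddGroup.mk' NG g = f h) ∧
    -- (b) its restriction to the cones is surjective:
    (∀ h ∈ PH, ∃ g ∈ P, QuotientAddGroup.mk' NG g = f h) ∧
    -- (c) its kernel is `N_G × {0}`, with total cone:
    (∀ (g : G) (h : H), QuotientAddGroup.mk' NG g = f h → h = 0 →
      g ∈ NG ∧ g ∈ P) ∧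
    -- (d) the induced map on quotients by the unit groups is surjective and injective:
    (∀ h : H, ∃ x : G × H,
      QuotientAddGroup.mk' NG x.1 = f x.2 ∧ x.2 - h ∈ NH) ∧
    (∀ x y : G × H,
      QuotientAddGroup.mk' NG x.1 = f x.2 → QuotientAddGroup.mk' NG y.1 = f y.2 →
      x.2 - y.2 ∈ NH → x.1 - y.1 ∈ NG) := by
  have hsurj (h : H) : ∃ g : G, QuotientAddGroup.mk' NG g = f h :=
    QuotientAddGroup.mk'_surjective NG (f h)
  refine ⟨hsurj, hcone, ?_, ?_, ?_⟩
  · rintro g h hg rfl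
    have hg : g ∈ NG := by rwa [map_zero, QuotientAddGroup.mk'_apply,
      QuotientAddGroup.eq_zero_iff] at hg
    exact ⟨hg, ((hNG g).mp hg).1⟩
  · intro h
    obtain ⟨g, hg⟩ := hsurj h
    exact ⟨(g, h), hg, by simp⟩
  · intro x y hx hy hxy
    have hfxy : f (x.2 - y.2) = 0 :=
      f.map_eq_zero_of_mem_cone_of_neg_mem_cone hNG hcone ((hNH _).mp hxy).1 ((hNH _).mp hxy).2
    rw [← QuotientAddGroup.eq_zero_iff, QuotientAddGroup.mk_sub, ← QuotientAddGroup.mk'_apply,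
      ← QuotientAddGroup.mk'_apply, hx, hy, ← map_sub, hfxy]

/-- Key computation for stable units. Given a preordered group `(G, P)`
with unit group `N_G`, and any morphism `f : (H, P_H) → (G ⧸ N_G, P̄)`, for the pullback
`G ×_{G ⧸ N_G} H` (with cone `P ×_{P̄} P_H`): the second projection is surjective, its
restriction to cones is surjective, its kernel is `N_G × {0}` with total cone, and the
induced map on quotients by unit groups is an isomorphism. -/
theorem stmt_18 (G H : Type*) [AddGroup G] [AddGroup H]
    (P : AddSubmonoid G)
    (hconjG : ∀ g : G, ∀ p ∈ P, g + p - g ∈ P)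
    (NG : AddSubgroup G) [NG.Normal] (hNG : ∀ x : G, x ∈ NG ↔ x ∈ P ∧ -x ∈ P)
    (PH : AddSubmonoid H)
    (hconjH : ∀ h : H, ∀ q ∈ PH, h + q - h ∈ PH)
    (NH : AddSubgroup H) [NH.Normal] (hNH : ∀ y : H, y ∈ NH ↔ y ∈ PH ∧ -y ∈ PH)
    (f : H →+ G ⧸ NG)
    -- the cone of `H` is sent into the image of `P`:
    (hcone : ∀ q ∈ PH, ∃ p ∈ P, QuotientAddGroup.mk' NG p = f q) :
    -- (a) the second projection of the pullback is surjective: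
    (∀ h : H, ∃ g : G, QuotientAddGroup.mk' NG g = f h) ∧
    -- (b) its restriction to the cones is surjective:
    (∀ h ∈ PH, ∃ g ∈ P, QuotientAddGroup.mk' NG g = f h) ∧
    -- (c) its kernel is `N_G × {0}`, with total cone:
    (∀ (g : G) (h : H), QuotientAddGroup.mk' NG g = f h → h = 0 →
      g ∈ NG ∧ g ∈ P) ∧
    -- (d) the induced map on quotients by the unit groups is surjective and injective:
    (∀ h : H, ∃ x : G × H,
      QuotientAddGroup.mk' NG x.1 = f x.2 ∧ x.2 - h ∈ NH) ∧
    (∀ x y : G × H,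
      QuotientAddGroup.mk' NG x.1 = f x.2 → QuotientAddGroup.mk' NG y.1 = f y.2 →
      x.2 - y.2 ∈ NH → x.1 - y.1 ∈ NG) :=
  stmt_18_general G H P NG hNG PH NH hNH f hcone
end
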